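/- arXiv:2403.13228 — 2 statements merged into one kernel-verified Lean document; each statement's English description precedes it below -/
import Mathlib

section
/- Let C be an algebraically closed field of characteristic zero, let R = C[X] be a finitely generated integral C-algebra (coordinate ring of an irreducible affine variety), with fraction field K = C(X). Suppose f₁,…,f_s, g ∈ R[T₁,…,T_m] are polynomials with g ≠ 0, and suppose the system f₁(T)=⋯=f_s(T)=0, g(T)≠0 has no solution in (algebraic closure of K)^m. Then there exists a nonzero element h ∈ R such that for every C-algebra homomorphism c : R → C with h^c ≠ 0 and g^c ≠ 0, the specialized system f₁^c(T)=⋯=f_s^c(T)=0, g^c(T)≠0 has no solution in C^m. -/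
set_option maxHeartbeats 1000000
set_option synthInstance.maxHeartbeats 400000

open MvPolynomial

private lemma mvMemMapRange {R S : Type*} [CommSemiring R] [CommSemiring S] {σ : Type*}
    (φ : R →+* S) (p : MvPolynomial σ S) (h : ∀ d, ∃ r, φ r = p.coeff d) :
    ∃ q : MvPolynomial σ R, MvPolynomial.map φ q = p := by
  classical
  choose r hr using h
  refine ⟨∑ d ∈ p.support, monomial d (r d), ?_⟩
  rw [map_sum]
  simp_rw [map_monomial, hr]
  exact p.support_sum_monomial_coeff

/-- **Lemma 3.1 (specialization of inconsistent systems).**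
Let `C` be an algebraically closed field of characteristic zero, `R = C[X]` a finitely
generated integral `C`-algebra with fraction field `K = C(X)`.  If the system
`f₁ = ⋯ = f_s = 0, g ≠ 0` has no solution in `K̄^m`, then there is a nonzero `h ∈ R`
such that for every `C`-point `c : R →ₐ[C] C` with `h^c ≠ 0` and `g^c ≠ 0`, the
specialized system has no solution in `C^m`. -/
theorem stmt0
    (C : Type*) [Field C] [IsAlgClosed C] [CharZero C]
    (R : Type*) [CommRing R] [IsDomain R] [Algebra C R] [Algebra.FiniteType C R]
    (m s : ℕ) (f : Fin s → MvPolynomial (Fin m) R) (g : MvPolynomial (Fin m) R)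
    (hg : g ≠ 0)
    (hnosol : ¬ ∃ t : Fin m → AlgebraicClosure (FractionRing R),
      (∀ i, MvPolynomial.eval₂
        ((algebraMap (FractionRing R) (AlgebraicClosure (FractionRing R))).comp
          (algebraMap R (FractionRing R))) t (f i) = 0) ∧
      MvPolynomial.eval₂
        ((algebraMap (FractionRing R) (AlgebraicClosure (FractionRing R))).comp
          (algebraMap R (FractionRing R))) t g ≠ 0) :
    ∃ h : R, h ≠ 0 ∧ ∀ c : R →ₐ[C] C, c h ≠ 0 →
      MvPolynomial.map (c : R →+* C) g ≠ 0 →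
      ¬ ∃ t : Fin m → C,
        (∀ i, MvPolynomial.eval₂ (c : R →+* C) t (f i) = 0) ∧
        MvPolynomial.eval₂ (c : R →+* C) t g ≠ 0 := by
  classical
  set K := FractionRing R with hK
  set Kb := AlgebraicClosure K with hKb
  set φ : R →+* K := algebraMap R K with hφdef
  set fK : Fin s → MvPolynomial (Fin m) K := fun i => MvPolynomial.map φ (f i) with hfK
  set gK : MvPolynomial (Fin m) K := MvPolynomial.map φ g with hgKdef
  have hφ : Function.Injective φ := IsFractionRing.injective R K
  have hgK : gK ≠ 0 := fun h0 => hg (MvPolynomial.map_injective φ hφ (by simpa using h0))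
  set e : MvPolynomial (Fin m) K →ₐ[K] MvPolynomial (Fin (m + 1)) K :=
    MvPolynomial.rename Fin.castSucc with he
  set F : Fin s → MvPolynomial (Fin (m + 1)) K := fun i => e (fK i) with hF
  set G : MvPolynomial (Fin (m + 1)) K := X (Fin.last m) * e gK - 1 with hG
  -- Step 1: the Rabinowitsch ideal is the unit ideal
  have hJ : Ideal.span (insert G (Set.range F)) = ⊤ := by
    by_contra hc
    obtain ⟨M, hM, hJM⟩ := Ideal.exists_le_maximal _ hc
    haveI := hM
    letI : Field (MvPolynomial (Fin (m + 1)) K ⧸ M) := Ideal.Quotient.field M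
    have hInt : RingHom.IsIntegral ((Ideal.Quotient.mk M).comp MvPolynomial.C) :=
      MvPolynomial.quotient_mk_comp_C_isIntegral_of_isJacobsonRing M
    haveI : Algebra.IsIntegral K (MvPolynomial (Fin (m + 1)) K ⧸ M) := by
      refine ⟨fun x => ?_⟩
      have h := hInt x
      have heq : (Ideal.Quotient.mk M).comp MvPolynomial.C
          = algebraMap K (MvPolynomial (Fin (m + 1)) K ⧸ M) := by
        rw [← MvPolynomial.algebraMap_eq]; rfl
      rwa [heq] at h
    haveI : Algebra.IsAlgebraic K (MvPolynomial (Fin (m + 1)) K ⧸ M) :=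
      Algebra.IsIntegral.isAlgebraic
    haveI : NoZeroSMulDivisors K (MvPolynomial (Fin (m + 1)) K ⧸ M) :=
      inferInstance
    haveI : NoZeroSMulDivisors K Kb :=
      inferInstance
    let ψ0 : (MvPolynomial (Fin (m + 1)) K ⧸ M) →ₐ[K] Kb := IsAlgClosed.lift
    let ψ : MvPolynomial (Fin (m + 1)) K →ₐ[K] Kb := ψ0.comp (Ideal.Quotient.mkₐ K M)
    have hψ : ∀ p ∈ Ideal.span (insert G (Set.range F)), ψ p = 0 := by
      intro p hp
      have h0 : Ideal.Quotient.mk M p = 0 := Ideal.Quotient.eq_zero_iff_mem.2 (hJM hp)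
      show ψ0 (Ideal.Quotient.mkₐ K M p) = 0
      rw [Ideal.Quotient.mkₐ_eq_mk, h0, map_zero]
    set t : Fin m → Kb := fun j => ψ (X (Fin.castSucc j)) with ht
    have key : ∀ q : MvPolynomial (Fin m) K, ψ (e q) = aeval t q := by
      intro q
      calc ψ (e q) = aeval (⇑ψ ∘ X) (MvPolynomial.rename Fin.castSucc q) := by
            rw [← MvPolynomial.aeval_unique ψ]
        _ = aeval ((⇑ψ ∘ X) ∘ Fin.castSucc) q := by rw [MvPolynomial.aeval_rename]
        _ = aeval t q := rfl
    apply hnosol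
    refine ⟨t, fun i => ?_, ?_⟩
    · show eval₂ ((algebraMap K Kb).comp φ) t (f i) = 0
      rw [(MvPolynomial.eval₂_map φ t (algebraMap K Kb) (f i)).symm,
        (MvPolynomial.aeval_def t (fK i)).symm, ← key]
      exact hψ _ (Ideal.subset_span (Set.mem_insert_of_mem _ ⟨i, rfl⟩))
    · show eval₂ ((algebraMap K Kb).comp φ) t g ≠ 0
      rw [(MvPolynomial.eval₂_map φ t (algebraMap K Kb) g).symm,
        (MvPolynomial.aeval_def t gK).symm, ← key]
      have hGmem := hψ G (Ideal.subset_span (Set.mem_insert _ _))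
      rw [hG, map_sub, map_mul, map_one, sub_eq_zero] at hGmem
      exact right_ne_zero_of_mul_eq_one hGmem
  -- Step 2: extract a Bezout identity
  have h1 : (1 : MvPolynomial (Fin (m + 1)) K) ∈ Ideal.span (insert G (Set.range F)) := by
    rw [hJ]; trivial
  rw [Ideal.mem_span_insert] at h1
  obtain ⟨b, z, hz, h1⟩ := h1
  rw [Ideal.mem_span_range_iff_exists_fun] at hz
  obtain ⟨a, ha⟩ := hz
  -- Step 3: substitute y ↦ 1/gK in the localization away from gK
  set Loc := Localization.Away gK with hLoc
  set u : MvPolynomial (Fin m) K →+* Loc := algebraMap (MvPolynomial (Fin m) K) Loc with hu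
  set w : Fin (m + 1) → Loc :=
    fun j => Fin.lastCases (IsLocalization.Away.invSelf gK) (fun i => u (X i)) j with hw
  set ev : MvPolynomial (Fin (m + 1)) K →+* Loc := eval₂Hom (u.comp MvPolynomial.C) w with hev
  have hev_e : ∀ q : MvPolynomial (Fin m) K, ev (e q) = u q := by
    intro q
    show eval₂ (u.comp MvPolynomial.C) w (MvPolynomial.rename Fin.castSucc q) = u q
    rw [MvPolynomial.eval₂_rename]
    have hcomp : (w ∘ Fin.castSucc) = ⇑u ∘ X := by
      funext i; simp [hw, Fin.lastCases_castSucc]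
    rw [hcomp]
    have h2 := MvPolynomial.eval₂_comp_left u MvPolynomial.C MvPolynomial.X q
    rw [MvPolynomial.eval₂_eta] at h2
    exact h2.symm
  have hevG : ev G = 0 := by
    have h1' : ev (X (Fin.last m)) = IsLocalization.Away.invSelf gK := by
      rw [hev, eval₂Hom_X']
      simp [hw]
    have hmul : u gK * IsLocalization.Away.invSelf gK = 1 :=
      IsLocalization.Away.mul_invSelf gK
    rw [hG, map_sub, map_mul, map_one, h1', hev_e, mul_comm, hmul, sub_self]
  have eqn2 : (1 : Loc) = ∑ i, ev (a i) * u (fK i) := by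
    have h2 := congrArg ev h1
    rw [map_one, map_add, map_mul, hevG, mul_zero, zero_add, ← ha, map_sum] at h2
    rw [h2]
    exact Finset.sum_congr rfl fun i _ => by rw [map_mul, hF, hev_e]
  -- Step 4: clear powers of gK
  obtain ⟨bb, hbb⟩ := IsLocalization.exist_integer_multiples_of_finite
      (Submonoid.powers gK) (fun i => ev (a i))
  obtain ⟨N, hN⟩ := bb.2
  simp only [IsLocalization.IsInteger, RingHom.mem_rangeS] at hbb
  choose B hB using hbb
  have eqn3 : u (gK ^ N) = u (∑ i, B i * fK i) := by
    rw [map_sum]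
    calc u (gK ^ N) = u (gK ^ N) * 1 := (mul_one _).symm
      _ = u (gK ^ N) * ∑ i, ev (a i) * u (fK i) := by rw [← eqn2]
      _ = ∑ i, (u (gK ^ N) * ev (a i)) * u (fK i) := by
            rw [Finset.mul_sum]; exact Finset.sum_congr rfl fun i _ => (mul_assoc _ _ _).symm
      _ = ∑ i, u (B i) * u (fK i) := by
            refine Finset.sum_congr rfl fun i _ => ?_
            congr 1
            rw [hB i, Algebra.smul_def]
            congr 1
            rw [← hN]
      _ = ∑ i, u (B i * fK i) := by
            exact Finset.sum_congr rfl fun i _ => (map_mul u _ _).symm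
  have hinj : Function.Injective u :=
    IsLocalization.injective Loc (powers_le_nonZeroDivisors_of_noZeroDivisors hgK)
  have eqn4 : gK ^ N = ∑ i, B i * fK i := hinj eqn3
  -- Step 5: clear denominators from K down to R
  set coeffSet : Finset K :=
    Finset.univ.biUnion (fun i : Fin s => (B i).support.image fun d => (B i).coeff d) with hcs
  obtain ⟨den, hden⟩ := IsLocalization.exist_integer_multiples
      (nonZeroDivisors R) coeffSet id
  have hD : ∀ i, ∃ D : MvPolynomial (Fin m) R,
      MvPolynomial.map φ D = MvPolynomial.C (φ den.1) * B i := by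
    intro i
    apply mvMemMapRange
    intro d
    rw [coeff_C_mul]
    by_cases hd : (B i).coeff d = 0
    · exact ⟨0, by simp [hd]⟩
    · have hmem : (B i).coeff d ∈ coeffSet :=
        Finset.mem_biUnion.2 ⟨i, Finset.mem_univ _,
          Finset.mem_image.2 ⟨d, mem_support_iff.2 hd, rfl⟩⟩
      obtain ⟨x, hx⟩ := hden _ hmem
      refine ⟨x, ?_⟩
      rw [hx, id_eq, Algebra.smul_def]
  choose D hDeq using hD
  have eqnR : MvPolynomial.C den.1 * g ^ N = ∑ i, D i * f i := by
    apply MvPolynomial.map_injective φ hφ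
    rw [map_mul, map_pow, map_sum, MvPolynomial.map_C]
    calc MvPolynomial.C (φ den.1) * (MvPolynomial.map φ g) ^ N
        = MvPolynomial.C (φ den.1) * ∑ i, B i * fK i := by rw [← hgKdef, eqn4]
      _ = ∑ i, (MvPolynomial.C (φ den.1) * B i) * fK i := by
            rw [Finset.mul_sum]; exact Finset.sum_congr rfl fun i _ => (mul_assoc _ _ _).symm
      _ = ∑ i, MvPolynomial.map φ (D i * f i) := by
            refine Finset.sum_congr rfl fun i _ => ?_
            rw [map_mul, hDeq]
  -- Step 6: conclusion
  have hden0 : den.1 ≠ 0 := nonZeroDivisors.ne_zero den.2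
  refine ⟨den.1, hden0, ?_⟩
  rintro c hc - ⟨t, hft, hgt⟩
  have e2 := congrArg (MvPolynomial.eval₂Hom (c : R →+* C) t) eqnR
  rw [map_mul, map_pow, map_sum] at e2
  rw [show (MvPolynomial.eval₂Hom (c : R →+* C) t) (MvPolynomial.C den.1) = c den.1 from
    eval₂Hom_C _ _ _] at e2
  have hz : (c den.1) * (MvPolynomial.eval₂Hom (c : R →+* C) t g) ^ N = 0 := by
    rw [e2]
    refine Finset.sum_eq_zero fun i _ => ?_
    rw [map_mul]
    have hfi : (MvPolynomial.eval₂Hom (c : R →+* C) t) (f i) = 0 := hft i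
    rw [hfi, mul_zero]
  rcases mul_eq_zero.1 hz with h | h
  · exact hc h
  · exact hgt (pow_eq_zero_iff'.mp h).1
end

section
/- Let k be a field of characteristic zero, T = (T₁,…,T_m) indeterminates with δ(Tᵢ) = 0, and consider the differential field k(T)(x) with δ = d/dx. Let L ∈ k[T,x][δ] and let P = δ^s + (p_{s-1}/q)δ^{s-1} + ⋯ + (p₀/q) with p_i, q ∈ k[T][x], q ≠ 0. Then there exist operators Q and R in k(T,x)[δ], each of the form (r_{ν-1}/q^m)δ^{ν-1} + ⋯ + (r₀/q^m) with m ≥ 0 and all r_i ∈ k[T][x], such that L = Q·P + R and ord(R) < s. -/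
open Polynomial

set_option synthInstance.maxHeartbeats 1000000
set_option maxHeartbeats 1000000

/-- Left composition with `δ`, with `X` standing for `δ`. -/
noncomputable def oreShift {F : Type*} [Field F] (d : F → F) (q : Polynomial F) :
    Polynomial F :=
  Polynomial.X * q + q.sum fun i a => Polynomial.C (d a) * Polynomial.X ^ i

/-- The Ore multiplication on `F[δ]` determined by `δ·a = a·δ + δ(a)`. -/
noncomputable def oreMul {F : Type*} [Field F] (d : F → F) (p q : Polynomial F) :
    Polynomial F :=
  p.sum fun i a => Polynomial.C a * (oreShift d)^[i] q

section Aux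

variable {F : Type*} [Field F] (d : F → F)

lemma oreShift_coeff (hd0 : d 0 = 0) (p : Polynomial F) (j : ℕ) :
    (oreShift d p).coeff j = (Polynomial.X * p).coeff j + d (p.coeff j) := by
  unfold oreShift
  rw [coeff_add]
  congr 1
  rw [Polynomial.sum, finset_sum_coeff]
  simp only [coeff_C_mul, coeff_X_pow, mul_ite, mul_one, mul_zero]
  rw [Finset.sum_ite_eq p.support j (fun i => d (p.coeff i))]
  by_cases h : j ∈ p.support
  · simp [h]
  · simp [h, Polynomial.notMem_support_iff.mp h, hd0]

lemma oreShift_monic (hd0 : d 0 = 0) {p : Polynomial F} (hp : p.Monic) :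
    (oreShift d p).Monic ∧ (oreShift d p).degree = p.degree + 1 := by
  have hp0 : p ≠ 0 := hp.ne_zero
  have hE : (p.sum fun i a => Polynomial.C (d a) * Polynomial.X ^ i).degree ≤ p.degree := by
    refine (Polynomial.degree_sum_le _ _).trans ?_
    refine Finset.sup_le fun i hi => ?_
    exact (degree_C_mul_X_pow_le i _).trans (le_degree_of_ne_zero
      (Polynomial.mem_support_iff.mp hi))
  have hXp : (Polynomial.X * p).degree = p.degree + 1 := by
    rw [degree_mul, degree_X, add_comm]
  have hlt : (p.sum fun i a => Polynomial.C (d a) * Polynomial.X ^ i).degree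
      < (Polynomial.X * p).degree := by
    rw [hXp]
    refine lt_of_le_of_lt hE ?_
    rw [degree_eq_natDegree hp0]
    exact_mod_cast WithBot.coe_lt_coe.mpr (Nat.lt_succ_self _)
  constructor
  · have : (oreShift d p).leadingCoeff = (Polynomial.X * p).leadingCoeff :=
      leadingCoeff_add_of_degree_lt' hlt
    rw [Monic, this]
    exact (monic_X.mul hp)
  · rw [oreShift, degree_add_eq_left_of_degree_lt hlt, hXp]

lemma oreShift_iterate_monic (hd0 : d 0 = 0) {p : Polynomial F} (hp : p.Monic) (t : ℕ) :
    ((oreShift d)^[t] p).Monic ∧ ((oreShift d)^[t] p).degree = p.degree + t := by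
  induction t with
  | zero => exact ⟨hp, by simp⟩
  | succ t ih =>
    rw [Function.iterate_succ_apply']
    obtain ⟨h1, h2⟩ := oreShift_monic d hd0 ih.1
    refine ⟨h1, ?_⟩
    rw [h2, ih.2]
    push_cast
    rw [add_assoc]

lemma oreMul_zero_left (r : Polynomial F) : oreMul d 0 r = 0 := by
  simp [oreMul]

lemma oreMul_add_left (p₁ p₂ r : Polynomial F) :
    oreMul d (p₁ + p₂) r = oreMul d p₁ r + oreMul d p₂ r := by
  unfold oreMul
  rw [Polynomial.sum_add_index] <;> intros <;> simp [add_mul]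

lemma oreMul_monomial (t : ℕ) (a : F) (r : Polynomial F) :
    oreMul d (Polynomial.monomial t a) r = Polynomial.C a * (oreShift d)^[t] r := by
  unfold oreMul
  rw [Polynomial.sum_monomial_index]
  simp

variable (S : Subring F)

lemma oreShift_mem (hd0 : d 0 = 0) (hdS : ∀ a ∈ S, d a ∈ S) {p : Polynomial F}
    (hp : ∀ i, p.coeff i ∈ S) (j : ℕ) : (oreShift d p).coeff j ∈ S := by
  rw [oreShift_coeff d hd0]
  refine S.add_mem ?_ (hdS _ (hp j))
  rcases j with _ | j
  · simpa using S.zero_mem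
  · rw [Polynomial.coeff_X_mul]
    exact hp j

lemma oreShift_iterate_mem (hd0 : d 0 = 0) (hdS : ∀ a ∈ S, d a ∈ S) {p : Polynomial F}
    (hp : ∀ i, p.coeff i ∈ S) (t : ℕ) (j : ℕ) : ((oreShift d)^[t] p).coeff j ∈ S := by
  induction t generalizing j with
  | zero => exact hp j
  | succ t ih =>
    rw [Function.iterate_succ_apply']
    exact oreShift_mem d S hd0 hdS ih j


lemma oreMul_mem (hd0 : d 0 = 0) (hdS : ∀ a ∈ S, d a ∈ S) {p r : Polynomial F}
    (hp : ∀ i, p.coeff i ∈ S) (hr : ∀ i, r.coeff i ∈ S) (j : ℕ) :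
    (oreMul d p r).coeff j ∈ S := by
  rw [oreMul, Polynomial.sum, finset_sum_coeff]
  refine S.sum_mem fun i _ => ?_
  rw [coeff_C_mul]
  exact S.mul_mem (hp i) (oreShift_iterate_mem d S hd0 hdS hr i j)

lemma ore_div (hd0 : d 0 = 0) (hdS : ∀ a ∈ S, d a ∈ S) {s : ℕ} {P : Polynomial F}
    (hPm : P.Monic) (hPd : P.degree = s) (hPS : ∀ i, P.coeff i ∈ S) (n : ℕ) :
    ∀ L : Polynomial F, (∀ i, L.coeff i ∈ S) → L.degree < n →
      ∃ Q R : Polynomial F, (∀ i, Q.coeff i ∈ S) ∧ (∀ i, R.coeff i ∈ S) ∧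
        L = oreMul d Q P + R ∧ R.degree < s := by
  induction n with
  | zero =>
    intro L hLS hLd
    rw [Nat.cast_zero] at hLd
    have hL0 : L = 0 := Polynomial.degree_eq_bot.mp (Nat.WithBot.lt_zero_iff.mp hLd)
    refine ⟨0, 0, fun i => by simpa using S.zero_mem, fun i => by simpa using S.zero_mem, ?_, ?_⟩
    · rw [oreMul_zero_left, zero_add, hL0]
    · rw [degree_zero]
      exact_mod_cast WithBot.bot_lt_coe s
  | succ n ih =>
    intro L hLS hLd
    by_cases hs : L.degree < s
    · exact ⟨0, L, fun i => by simpa using S.zero_mem, hLS, by rw [oreMul_zero_left, zero_add], hs⟩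
    · push_neg at hs
      have hL0 : L ≠ 0 := by
        intro h
        rw [h, degree_zero] at hs
        exact absurd hs (not_le.mpr (WithBot.bot_lt_coe s))
      have hsd : s ≤ L.natDegree := by
        rw [degree_eq_natDegree hL0] at hs
        exact_mod_cast hs
      set t := L.natDegree - s with ht
      set a := L.leadingCoeff with ha
      have ha0 : a ≠ 0 := leadingCoeff_ne_zero.mpr hL0
      obtain ⟨hWm, hWd⟩ := oreShift_iterate_monic d hd0 hPm t
      set W := (oreShift d)^[t] P with hW
      have haS : a ∈ S := hLS L.natDegree
      have hWdeg : W.degree = (L.natDegree : WithBot ℕ) := by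
        rw [hWd, hPd]
        rw [← Nat.cast_add, Nat.add_sub_cancel' hsd]
      have hMdeg : L.degree = (Polynomial.C a * W).degree := by
        rw [degree_mul, degree_C ha0, zero_add, hWdeg, degree_eq_natDegree hL0]
      have hMlc : L.leadingCoeff = (Polynomial.C a * W).leadingCoeff := by
        rw [leadingCoeff_mul, leadingCoeff_C, hWm.leadingCoeff, mul_one]
      have hsub : (L - Polynomial.C a * W).degree < L.degree :=
        degree_sub_lt hMdeg hL0 hMlc
      have hdn : (L - Polynomial.C a * W).degree < (n : WithBot ℕ) := by
        refine lt_of_lt_of_le hsub ?_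
        rw [degree_eq_natDegree hL0]
        have h1 : L.natDegree < n + 1 := by
          have h2 := hLd
          rw [degree_eq_natDegree hL0] at h2
          exact_mod_cast h2
        exact_mod_cast Nat.lt_succ_iff.mp h1
      have hsubS : ∀ i, (L - Polynomial.C a * W).coeff i ∈ S := fun i => by
        rw [coeff_sub, coeff_C_mul]
        exact S.sub_mem (hLS i) (S.mul_mem haS (oreShift_iterate_mem d S hd0 hdS hPS t i))
      obtain ⟨Q', R', hQ'S, hR'S, hEq, hRd⟩ := ih _ hsubS hdn
      refine ⟨Q' + Polynomial.monomial t a, R', ?_, hR'S, ?_, hRd⟩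
      · intro i
        rw [coeff_add]
        refine S.add_mem (hQ'S i) ?_
        rw [Polynomial.coeff_monomial]
        split
        · exact haS
        · exact S.zero_mem
      · rw [oreMul_add_left, oreMul_monomial]
        have hL : L = (L - Polynomial.C a * W) + Polynomial.C a * W := by ring
        rw [hL, hEq]
        ring

end Aux

/-- The subring of elements of the form `r / qⁿ`. -/
def denomSubring {A F : Type*} [CommRing A] [Field F] (φ : A →+* F) (q : A) :
    Subring F where
  carrier := {a | ∃ r n, a * φ q ^ n = φ r}
  zero_mem' := ⟨0, 0, by simp⟩
  one_mem' := ⟨1, 0, by simp⟩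
  add_mem' := by
    rintro a b ⟨r1, n1, h1⟩ ⟨r2, n2, h2⟩
    exact ⟨r1 * q ^ n2 + r2 * q ^ n1, n1 + n2, by
      rw [map_add, map_mul, map_mul, map_pow, map_pow, ← h1, ← h2]; ring⟩
  mul_mem' := by
    rintro a b ⟨r1, n1, h1⟩ ⟨r2, n2, h2⟩
    exact ⟨r1 * r2, n1 + n2, by rw [map_mul, ← h1, ← h2]; ring⟩
  neg_mem' := by
    rintro a ⟨r1, n1, h1⟩
    exact ⟨-r1, n1, by rw [map_neg, ← h1]; ring⟩

lemma mem_denomSubring {A F : Type*} [CommRing A] [Field F] (φ : A →+* F) (q : A)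
    (a : F) : a ∈ denomSubring φ q ↔ ∃ r n, a * φ q ^ n = φ r := Iff.rfl

lemma repr_common_denom {A F : Type*} [CommRing A] [Field F] (φ : A →+* F)
    {q : A} (hq0 : φ q ≠ 0) (W : Polynomial F)
    (h : ∀ i, ∃ (r : A) (n : ℕ), W.coeff i * φ q ^ n = φ r) :
    ∃ (mW nW : ℕ) (rW : ℕ → A),
      W = ∑ i ∈ Finset.range nW, Polynomial.C (φ (rW i) / φ q ^ mW) * Polynomial.X ^ i := by
  choose r nn hrn using h
  refine ⟨(Finset.range (W.natDegree + 1)).sup nn, W.natDegree + 1,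
    fun i => r i * q ^ ((Finset.range (W.natDegree + 1)).sup nn - nn i), ?_⟩
  conv_lhs => rw [W.as_sum_range' (W.natDegree + 1) (Nat.lt_succ_self _)]
  refine Finset.sum_congr rfl fun i hi => ?_
  rw [← Polynomial.C_mul_X_pow_eq_monomial]
  have hle : nn i ≤ (Finset.range (W.natDegree + 1)).sup nn := Finset.le_sup hi
  have hc : W.coeff i = φ (r i) * φ q ^ ((Finset.range (W.natDegree + 1)).sup nn - nn i) /
      φ q ^ (Finset.range (W.natDegree + 1)).sup nn := by
    rw [eq_div_iff (pow_ne_zero _ hq0), ← hrn i, mul_assoc, ← pow_add,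
      Nat.add_sub_cancel' hle]
  rw [hc, map_mul, map_pow]

/-- **Lemma 3.2 (division with controlled denominators).**
Let `k` be a field of characteristic zero, `T = (T₁,…,T_m)` indeterminates with
`δ(Tᵢ) = 0`, working in `k(T,x)[δ]` with `δ = d/dx`.  Here `k[T] = MvPolynomial (Fin m) k`,
`k[T][x] = Polynomial (MvPolynomial (Fin m) k)` and `k(T,x)` is its fraction field.
Given `L ∈ k[T,x][δ]` and `P = δ^s + (p_{s-1}/q)δ^{s-1} + ⋯ + p₀/q` with
`pᵢ, q ∈ k[T][x]`, `q ≠ 0`, there exist `Q, R ∈ k(T,x)[δ]` whose coefficients are of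
the form `rᵢ/q^m` with `rᵢ ∈ k[T][x]`, such that `L = Q·P + R` and `ord(R) < s`. -/
theorem stmt4
    (k : Type*) [Field k] [CharZero k] (m s : ℕ)
    (d : FractionRing (Polynomial (MvPolynomial (Fin m) k)) →
         FractionRing (Polynomial (MvPolynomial (Fin m) k)))
    (hdadd : ∀ a b, d (a + b) = d a + d b)
    (hdmul : ∀ a b, d (a * b) = a * d b + d a * b)
    (hdX : d (algebraMap (Polynomial (MvPolynomial (Fin m) k))
      (FractionRing (Polynomial (MvPolynomial (Fin m) k))) Polynomial.X) = 1)
    (hdconst : ∀ a : MvPolynomial (Fin m) k,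
      d (algebraMap (Polynomial (MvPolynomial (Fin m) k))
        (FractionRing (Polynomial (MvPolynomial (Fin m) k))) (Polynomial.C a)) = 0)
    (L : Polynomial (Polynomial (MvPolynomial (Fin m) k)))
    (p : Fin s → Polynomial (MvPolynomial (Fin m) k))
    (q : Polynomial (MvPolynomial (Fin m) k)) (hq : q ≠ 0)
    (P : Polynomial (FractionRing (Polynomial (MvPolynomial (Fin m) k))))
    (hP : P = Polynomial.X ^ s + ∑ i : Fin s,
      Polynomial.C (algebraMap _ (FractionRing (Polynomial (MvPolynomial (Fin m) k))) (p i) /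
        algebraMap _ (FractionRing (Polynomial (MvPolynomial (Fin m) k))) q) *
      Polynomial.X ^ (i : ℕ)) :
    ∃ (mQ mR nQ nR : ℕ)
      (rQ rR : ℕ → Polynomial (MvPolynomial (Fin m) k))
      (Q R : Polynomial (FractionRing (Polynomial (MvPolynomial (Fin m) k)))),
      Q = ∑ i ∈ Finset.range nQ,
        Polynomial.C (algebraMap _ _ (rQ i) / (algebraMap _ _ q) ^ mQ) *
          Polynomial.X ^ i ∧
      R = ∑ i ∈ Finset.range nR,
        Polynomial.C (algebraMap _ _ (rR i) / (algebraMap _ _ q) ^ mR) *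
          Polynomial.X ^ i ∧
      L.map (algebraMap _ _) = oreMul d Q P + R ∧
      R.degree < s := by
  set φ : Polynomial (MvPolynomial (Fin m) k) →+*
      FractionRing (Polynomial (MvPolynomial (Fin m) k)) :=
    algebraMap (Polynomial (MvPolynomial (Fin m) k))
      (FractionRing (Polynomial (MvPolynomial (Fin m) k))) with hφ
  have hq0 : φ q ≠ 0 := fun h =>
    hq ((map_eq_zero_iff φ (IsFractionRing.injective _ _)).mp h)
  have hd0 : d 0 = 0 := by
    have h := hdadd 0 0
    rw [add_zero] at h
    have h2 : d 0 + 0 = d 0 + d 0 := by rw [add_zero]; exact h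
    exact (add_left_cancel h2).symm
  -- d composed with φ is the formal derivative
  have hdalg : ∀ r : Polynomial (MvPolynomial (Fin m) k),
      d (φ r) = φ (Polynomial.derivative r) := by
    intro r
    induction r using Polynomial.induction_on with
    | C a => rw [derivative_C, map_zero]; exact hdconst a
    | add u v hu hv => rw [map_add, hdadd, hu, hv, derivative_add, map_add]
    | monomial n a ih =>
      have hsplit : (Polynomial.C a : Polynomial (MvPolynomial (Fin m) k)) *
          Polynomial.X ^ (n + 1)
          = Polynomial.C a * Polynomial.X ^ n * Polynomial.X := by ring
      rw [hsplit, map_mul, hdmul, hdX, ih]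
      rw [show Polynomial.derivative (Polynomial.C a * Polynomial.X ^ n * Polynomial.X)
          = Polynomial.derivative (Polynomial.C a * Polynomial.X ^ n) * Polynomial.X +
            Polynomial.C a * Polynomial.X ^ n from by
        rw [derivative_mul, derivative_X, mul_one]]
      rw [map_add, map_mul, mul_one, add_comm, map_mul φ]
  set S : Subring (FractionRing (Polynomial (MvPolynomial (Fin m) k))) :=
    denomSubring φ q with hS
  have hdS : ∀ a ∈ S, d a ∈ S := by
    rintro a ⟨r, n, h⟩
    refine ⟨Polynomial.derivative r * q ^ n - r * Polynomial.derivative (q ^ n), n + n, ?_⟩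
    have h1 : d (a * φ q ^ n) = a * d (φ q ^ n) + d a * φ q ^ n := hdmul _ _
    have h2 : d (φ q ^ n) = φ (Polynomial.derivative (q ^ n)) := by
      rw [← map_pow, hdalg]
    rw [h, hdalg, h2] at h1
    have h3 : d a * φ q ^ n * φ q ^ n
        = φ (Polynomial.derivative r) * φ q ^ n -
          (a * φ q ^ n) * φ (Polynomial.derivative (q ^ n)) := by
      rw [h1]; ring
    rw [h] at h3
    rw [map_sub, map_mul, map_mul, map_pow, pow_add, ← mul_assoc]
    exact h3
  -- properties of P
  have hEdeg : (∑ i : Fin s, Polynomial.C (φ (p i) / φ q) *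
      Polynomial.X ^ (i : ℕ)).degree < (s : WithBot ℕ) := by
    apply lt_of_le_of_lt (Polynomial.degree_sum_le _ _)
    rw [Finset.sup_lt_iff (show (⊥ : WithBot ℕ) < s from by
      exact_mod_cast WithBot.bot_lt_coe s)]
    intro i _
    exact lt_of_le_of_lt (Polynomial.degree_C_mul_X_pow_le _ _) (by exact_mod_cast i.2)
  have hXs : (Polynomial.X ^ s :
      Polynomial (FractionRing (Polynomial (MvPolynomial (Fin m) k)))).degree = s :=
    degree_X_pow s
  have hlt : (∑ i : Fin s, Polynomial.C (φ (p i) / φ q) *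
      Polynomial.X ^ (i : ℕ)).degree < (Polynomial.X ^ s :
      Polynomial (FractionRing (Polynomial (MvPolynomial (Fin m) k)))).degree := by
    rw [hXs]; exact hEdeg
  have hPdeg : P.degree = s := by
    rw [hP, degree_add_eq_left_of_degree_lt hlt, hXs]
  have hPm : P.Monic := by
    rw [Monic, hP, leadingCoeff_add_of_degree_lt' hlt]
    exact monic_X_pow s
  have hPS : ∀ i, P.coeff i ∈ S := by
    intro i
    rw [hP, coeff_add]
    refine S.add_mem ?_ ?_
    · rw [coeff_X_pow]
      split
      · exact S.one_mem
      · exact S.zero_mem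
    · rw [finset_sum_coeff]
      refine S.sum_mem fun j _ => ?_
      rw [coeff_C_mul, coeff_X_pow]
      split
      · rw [mul_one]
        exact ⟨p j, 1, by rw [pow_one, div_mul_cancel₀ _ hq0]⟩
      · simpa using S.zero_mem
  -- divide
  have hLS : ∀ i, (L.map φ).coeff i ∈ S := fun i =>
    ⟨L.coeff i, 0, by rw [coeff_map]; simp⟩
  have hLdeg : (L.map φ).degree < (((L.map φ).natDegree + 1 : ℕ) : WithBot ℕ) :=
    lt_of_le_of_lt degree_le_natDegree (by exact_mod_cast Nat.lt_succ_self _)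
  obtain ⟨Q, R, hQS, hRS, hEq, hRdeg⟩ :=
    ore_div d S hd0 hdS hPm hPdeg hPS ((L.map φ).natDegree + 1) (L.map φ) hLS hLdeg
  obtain ⟨mQ, nQ, rQ, hQrepr⟩ := repr_common_denom φ hq0 Q hQS
  obtain ⟨mR, nR, rR, hRrepr⟩ := repr_common_denom φ hq0 R hRS
  exact ⟨mQ, mR, nQ, nR, rQ, rR, Q, R, hQrepr, hRrepr, hEq, hRdeg⟩
end
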